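/- arXiv:1501.05089 — 4 statements merged into one kernel-verified Lean document; each statement's English description precedes it below -/
import Mathlib

section
/- Suppose positive integers t_{ab}, t_{ac}, t_{ad}, t_{bc}, t_{bd}, t_{cd} satisfy t_{ab}+t_{bc}+t_{ca} = t_{ab}+t_{bd}+t_{da} = t_{ac}+t_{cd}+t_{da} = t_{bc}+t_{cd}+t_{db} = 2k+1. Let u split the ab-path with t_{au} + t_{bu} = t_{ab} and v split the cd-path with t_{cv} + t_{dv} = t_{cd} (all parts positive). Then min{t_{au} + t_{ac} + t_{cv}, t_{bu} + t_{bd} + t_{dv}} ≤ 2k and min{t_{au} + t_{ad} + t_{dv}, t_{bu} + t_{bc} + t_{cv}} ≤ 2k, and these two minima have different parities. -/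
/-- Numerical core of Lemma 5: in a subdivision of `K₄` with all four faces of odd
length `2k+1`, for internal vertices `u` on the `ab`-path and `v` on the `cd`-path,
both minima of opposite connecting path lengths are at most `2k`, and the two
minima have different parities. -/
theorem K4_subdivision_odd_faces (k tab tac tad tbc tbd tcd tau tbu tcv tdv : ℕ)
    (hk : 1 ≤ k)
    (hab : 1 ≤ tab) (hac : 1 ≤ tac) (had : 1 ≤ tad)
    (hbc : 1 ≤ tbc) (hbd : 1 ≤ tbd) (hcd : 1 ≤ tcd)
    (h1 : tab + tbc + tac = 2 * k + 1) (h2 : tab + tbd + tad = 2 * k + 1)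
    (h3 : tac + tcd + tad = 2 * k + 1) (h4 : tbc + tcd + tbd = 2 * k + 1)
    (hau : 1 ≤ tau) (hbu : 1 ≤ tbu) (hcv : 1 ≤ tcv) (hdv : 1 ≤ tdv)
    (hu : tau + tbu = tab) (hv : tcv + tdv = tcd) :
    min (tau + tac + tcv) (tbu + tbd + tdv) ≤ 2 * k ∧
    min (tau + tad + tdv) (tbu + tbc + tcv) ≤ 2 * k ∧
    min (tau + tac + tcv) (tbu + tbd + tdv) % 2
      ≠ min (tau + tad + tdv) (tbu + tbc + tcv) % 2 := by
  omega
end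

section
/- Let G and H be graphs, both of odd-girth exactly 2k+1, and suppose there is a homomorphism from G to H. If G^(2k-1) contains a clique of size n, then H^(2k-1) contains a clique of size n; in particular H has at least n vertices. -/
open SimpleGraph Walk

lemma odd_closed_walk_cycle {V : Type*} {G : SimpleGraph V} :
    ∀ (n : ℕ) (u : V) (w : G.Walk u u), w.length = n → Odd n →
      ∃ (x : V) (c : G.Walk x x), c.IsCycle ∧ Odd c.length ∧ c.length ≤ n := by
  classical
  intro n
  induction n using Nat.strong_induction_on with
  | _ n ih =>
    intro u w hlen hodd
    cases w with
    | nil => simp at hlen; subst hlen; simp [Nat.odd_iff] at hodd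
    | @cons _ x _ h p =>
      by_cases hp : p.IsPath
      · by_cases he : s(u, x) ∈ p.edges
        · -- derive a contradiction
          exfalso
          obtain ⟨d, hd, hde⟩ := List.mem_map.mp he
          rw [SimpleGraph.dart_edge_eq_mk'_iff'] at hde
          cases p with
          | nil => simp [Walk.darts] at hd
          | @cons _ y _ h2 q =>
            rw [Walk.cons_isPath_iff] at hp
            rcases hp with ⟨hq, hxq⟩
            simp only [Walk.darts_cons, List.mem_cons] at hd
            rcases hd with rfl | hd
            · -- d is the first dart, with fst = x
              rcases hde with ⟨h1, h2'⟩ | ⟨h1, h2'⟩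
              · exact h.ne (by simpa using h1.symm)
              · -- y = u, so q : Walk u u is a path, hence nil
                subst h2'
                have : (⟨q, hq⟩ : G.Path y y) = SimpleGraph.Path.nil := SimpleGraph.Path.loop_eq _
                have hqnil : q = Walk.nil := congrArg Subtype.val this
                subst hqnil
                simp at hlen
                subst hlen
                simp [Nat.odd_iff] at hodd
            · rcases hde with ⟨h1, h2'⟩ | ⟨h1, h2'⟩
              · exact hxq (h2' ▸ Walk.dart_snd_mem_support_of_mem_darts q hd)
              · exact hxq (h1 ▸ Walk.dart_fst_mem_support_of_mem_darts q hd)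
        · refine ⟨u, Walk.cons h p, (Walk.cons_isCycle_iff p h).mpr ⟨hp, he⟩, ?_, ?_⟩
          · rwa [hlen]
          · rw [hlen]
      · -- p has a repeated vertex
        have hnd : ¬ p.support.Nodup := fun hnd => hp (Walk.IsPath.mk' hnd)
        obtain ⟨a, ha⟩ := List.exists_duplicate_iff_not_nodup.mpr hnd
        have hcount : 2 ≤ p.support.count a := List.duplicate_iff_two_le_count.mp ha
        have hmem : a ∈ p.support := ha.mem
        have hspec := p.take_spec hmem
        have hc1 : (p.takeUntil a hmem).support.count a = 1 :=
          p.count_support_takeUntil_eq_one hmem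
        have hmem2 : a ∈ (p.dropUntil a hmem).support.tail := by
          have := congrArg (fun w => List.count a (Walk.support w)) hspec
          simp only [Walk.support_append, List.count_append] at this
          have : 1 ≤ ((p.dropUntil a hmem).support.tail).count a := by omega
          exact List.count_pos_iff.mp (by omega)
        set t := p.takeUntil a hmem with ht
        generalize hd : p.dropUntil a hmem = d at *
        cases d with
        | nil => simp at hmem2
        | @cons _ b _ h2 q =>
          simp only [Walk.support_cons, List.tail_cons] at hmem2
          -- two closed walks
          have hlent : t.length + (Walk.cons h2 q).length = p.length := by
            have := congrArg Walk.length hspec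
            rw [Walk.length_append] at this
            omega
          set c2 : G.Walk a a := Walk.cons h2 (q.takeUntil a hmem2) with hc2
          set couter : G.Walk u u := Walk.cons h (t.append ((q.dropUntil a hmem2).copy rfl rfl)) with hcouter
          have hq2 : (q.takeUntil a hmem2).length + (q.dropUntil a hmem2).length = q.length := by
            have := congrArg Walk.length (q.take_spec hmem2)
            rw [Walk.length_append] at this
            omega
          have hsum : c2.length + couter.length = n := by
            simp only [hc2, hcouter, Walk.length_cons, Walk.length_append, Walk.length_copy]
            simp only [Walk.length_cons] at hlent hlen ⊢
            omega
          have h1pos : 1 ≤ c2.length := by simp [hc2]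
          have h2pos : 1 ≤ couter.length := by simp [hcouter]
          have : Odd c2.length ∨ Odd couter.length := by
            rcases Nat.even_or_odd c2.length with he1 | ho1
            · right
              rcases Nat.even_or_odd couter.length with he2 | ho2
              · exfalso; rw [← hsum] at hodd
                simp [Nat.odd_iff, Nat.even_iff] at hodd he1 he2; omega
              · exact ho2
            · left; exact ho1
          rcases this with ho | ho
          · obtain ⟨x', c, hc, hoc, hle⟩ := ih c2.length (by omega) a c2 rfl ho
            exact ⟨x', c, hc, hoc, by omega⟩
          · obtain ⟨x', c, hc, hoc, hle⟩ := ih couter.length (by omega) u couter rfl ho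
            exact ⟨x', c, hc, hoc, by omega⟩

/-- Let `G`, `H` have odd-girth exactly `2k+1` and suppose `φ : G →g H`.
If the `(2k-1)`-st walk-power of `G` contains a clique of size `n`, then so does
that of `H`; in particular `H` has at least `n` vertices. -/
theorem clique_walk_power_hom {V W : Type*} [Fintype W]
    (G : SimpleGraph V) (H : SimpleGraph W) (k n : ℕ) (hk : 1 ≤ k)
    (hGodd : (∃ (v : V) (c : G.Walk v v), c.IsCycle ∧ Odd c.length ∧ c.length = 2 * k + 1) ∧
      ∀ (v : V) (c : G.Walk v v), c.IsCycle → Odd c.length → 2 * k + 1 ≤ c.length)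
    (hHodd : (∃ (v : W) (c : H.Walk v v), c.IsCycle ∧ Odd c.length ∧ c.length = 2 * k + 1) ∧
      ∀ (v : W) (c : H.Walk v v), c.IsCycle → Odd c.length → 2 * k + 1 ≤ c.length)
    (φ : G →g H)
    (s : Finset V) (hcard : s.card = n)
    (hclique : ∀ x ∈ s, ∀ y ∈ s, x ≠ y → ∃ w : G.Walk x y, w.length = 2 * k - 1) :
    ∃ t : Finset W, t.card = n ∧
      (∀ x ∈ t, ∀ y ∈ t, x ≠ y → ∃ w : H.Walk x y, w.length = 2 * k - 1) ∧
      n ≤ Fintype.card W := by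
  classical
  -- H has no closed walk of odd length 2k-1
  have hodd : Odd (2 * k - 1) := by
    rcases k with _ | k
    · omega
    · exact ⟨k, by omega⟩
  have hno : ∀ (z : W) (c : H.Walk z z), c.length ≠ 2 * k - 1 := by
    intro z c hc
    obtain ⟨x', c', hcyc, hoc, hle⟩ := odd_closed_walk_cycle (2 * k - 1) z c hc hodd
    have := hHodd.2 x' c' hcyc hoc
    omega
  have hinj : Set.InjOn φ s := by
    intro x hx y hy hxy
    by_contra hne
    obtain ⟨w, hw⟩ := hclique x hx y hy hne
    exact hno (φ x) ((w.map φ).copy rfl hxy.symm) (by simpa using hw)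
  refine ⟨s.image φ, by rw [Finset.card_image_of_injOn hinj, hcard], ?_, ?_⟩
  · intro x' hx' y' hy' hne
    obtain ⟨x, hx, rfl⟩ := Finset.mem_image.mp hx'
    obtain ⟨y, hy, rfl⟩ := Finset.mem_image.mp hy'
    have hxy : x ≠ y := fun h => hne (by rw [h])
    obtain ⟨w, hw⟩ := hclique x hx y hy hxy
    exact ⟨w.map φ, by simpa using hw⟩
  · calc n = (s.image φ).card := by rw [Finset.card_image_of_injOn hinj, hcard]
      _ ≤ Fintype.card W := Finset.card_le_univ _
end

section
/- For every k ≥ 1, the projective cube PC_{2k} has no odd cycle of length less than 2k+1, i.e., its odd-girth is exactly 2k+1. -/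
/-!
Label each step of a walk by the generator it uses, let `t` be the number of `J`-steps and `cᵢ`
the number of `eᵢ`-steps. Coordinate `i` changes exactly at the `J`- and `eᵢ`-steps, so along a
closed walk every `t + cᵢ` is even. If `t` were even, all `cᵢ` and hence the length `t + ∑ cᵢ`
would be even; so `t` is odd, every `cᵢ` is odd and in particular positive, and the length is at
least `1 + d`.
-/

/-- The projective cube of dimension `d`. -/
def projCube (d : ℕ) : SimpleGraph (Fin d → ZMod 2) where
  Adj u v := u ≠ v ∧ ((∃ i, u + v = Pi.single i 1) ∨ u + v = fun _ => 1)
  symm := ⟨by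
    rintro u v ⟨h1, h2⟩
    exact ⟨h1.symm, by rwa [add_comm] at h2⟩⟩
  loopless := ⟨by rintro u ⟨h, -⟩; exact h rfl⟩

namespace projCube

variable {d : ℕ}

/-- The connection set `{e₁, …, e_d, J}`, with `none` labelling the all-ones vector `J`. -/
def gen (d : ℕ) : Option (Fin d) → Fin d → ZMod 2
  | none => fun _ => 1
  | some i => Pi.single i 1

theorem exists_gen_of_adj {u v : Fin d → ZMod 2} (h : (projCube d).Adj u v) :
    ∃ s, u + v = gen d s := by
  obtain ⟨-, ⟨i, hi⟩ | hJ⟩ := h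
  · exact ⟨some i, hi⟩
  · exact ⟨none, hJ⟩

theorem exists_labels_of_walk {u w : Fin d → ZMod 2} (p : (projCube d).Walk u w) :
    ∃ ls : List (Option (Fin d)), ls.length = p.length ∧ (ls.map (gen d)).sum = u + w := by
  induction p with
  | nil => exact ⟨[], rfl, (ZModModule.add_self _).symm⟩
  | @cons u v w h p ih =>
    obtain ⟨s, hs⟩ := exists_gen_of_adj h
    obtain ⟨ls, hlen, hsum⟩ := ih
    refine ⟨s :: ls, by simp [hlen], ?_⟩
    rw [List.map_cons, List.sum_cons, hsum, ← hs, add_assoc, ← add_assoc v, ZModModule.add_self,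
      zero_add]

theorem gen_apply (s : Option (Fin d)) (i : Fin d) :
    gen d s i = (if s = none then 1 else 0) + (if s = some i then 1 else 0) := by
  cases s with
  | none => simp [gen]
  | some j => simp [gen, Pi.single_apply, eq_comm]

theorem sum_map_gen_apply (ls : List (Option (Fin d))) (i : Fin d) :
    (ls.map (gen d)).sum i = ((ls.count none + ls.count (some i) : ℕ) : ZMod 2) := by
  induction ls with
  | nil => simp
  | cons s ls ih =>
    rw [List.map_cons, List.sum_cons, Pi.add_apply, ih, gen_apply]
    simp only [List.count_cons, beq_iff_eq]
    push_cast
    split_ifs <;> ring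

theorem length_eq_count_none_add_sum_count_some (ls : List (Option (Fin d))) :
    ls.length = ls.count none + ∑ i, ls.count (some i) := by
  induction ls with
  | nil => simp
  | cons s ls ih =>
    cases s <;> simp [List.count_cons, Finset.sum_add_distrib, ih] <;> omega

theorem le_length_of_sum_map_gen_eq_zero {ls : List (Option (Fin d))}
    (hsum : (ls.map (gen d)).sum = 0) (hodd : Odd ls.length) : d + 1 ≤ ls.length := by
  have hpar : ∀ i, (Even (ls.count none) ↔ Even (ls.count (some i))) := fun i => by
    rw [← Nat.even_add, ← ZMod.natCast_eq_zero_iff_even, ← sum_map_gen_apply, hsum, Pi.zero_apply]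
  rw [length_eq_count_none_add_sum_count_some] at hodd ⊢
  have hnone : ¬Even (ls.count none) := fun h =>
    Nat.not_even_iff_odd.mpr hodd (h.add (Finset.even_sum _ fun i _ => (hpar i).mp h))
  have hsome : ∀ i, 1 ≤ ls.count (some i) := fun i =>
    Nat.one_le_iff_ne_zero.mpr fun h0 => hnone ((hpar i).mpr (h0 ▸ Even.zero))
  have hsome_sum : d ≤ ∑ i, ls.count (some i) := by
    simpa using Finset.card_nsmul_le_sum Finset.univ _ 1 fun i _ => hsome i
  have hnone_pos : 1 ≤ ls.count none :=
    Nat.one_le_iff_ne_zero.mpr fun h0 => hnone (h0 ▸ Even.zero)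
  omega

end projCube

theorem projCube_odd_girth_general (k : ℕ) :
    ∀ (v : Fin (2 * k) → ZMod 2) (c : (projCube (2 * k)).Walk v v),
      c.IsCycle → Odd c.length → 2 * k + 1 ≤ c.length := by
  intro v c _ hodd
  obtain ⟨ls, hlen, hsum⟩ := projCube.exists_labels_of_walk c
  rw [← hlen] at hodd ⊢
  exact projCube.le_length_of_sum_map_gen_eq_zero
    (hsum.trans (ZModModule.add_self v)) hodd

/-- For every `k ≥ 1`, `PC_{2k}` has no odd cycle of length less than `2k+1`:
its odd-girth is (at least, hence exactly) `2k+1`. -/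
theorem projCube_odd_girth (k : ℕ) (hk : 1 ≤ k) :
    ∀ (v : Fin (2 * k) → ZMod 2) (c : (projCube (2 * k)).Walk v v),
      c.IsCycle → Odd c.length → 2 * k + 1 ≤ c.length :=
  projCube_odd_girth_general k
end

section
/- Let B be a graph of odd-girth 2k+1 that bounds the class of planar graphs of odd-girth at least 2k+1 (i.e., every planar graph of odd-girth ≥ 2k+1 admits a homomorphism to B). Assuming there exists a planar graph G of odd-girth 2k+1 whose (2k-1)-st walk-power contains a clique of size 2^{2k}, then |V(B)| ≥ 2^{2k}. -/
/-- `G` is a minor of `H`: there is a family of nonempty, pairwise disjoint,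
connected branch sets in `H`, one per vertex of `G`, with edges of `G`
realized by edges of `H` between the corresponding branch sets. -/
def IsMinor {V W : Type*} (G : SimpleGraph V) (H : SimpleGraph W) : Prop :=
  ∃ f : V → Set W,
    (∀ v, (f v).Nonempty) ∧
    (∀ v, (SimpleGraph.induce (f v) H).Connected) ∧
    (∀ u v, u ≠ v → Disjoint (f u) (f v)) ∧
    (∀ u v, G.Adj u v → ∃ x ∈ f u, ∃ y ∈ f v, H.Adj x y)

/-- Planarity via Wagner's theorem: no `K₅` minor and no `K₃,₃` minor. -/
def IsPlanar {W : Type*} (H : SimpleGraph W) : Prop :=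
  ¬ IsMinor (⊤ : SimpleGraph (Fin 5)) H ∧
  ¬ IsMinor (completeBipartiteGraph (Fin 3) (Fin 3)) H

/-!
A homomorphism `f : G → B` maps a walk of length `2k - 1` between distinct vertices `x, y` to a
walk of the same length from `f x` to `f y`. If `f x = f y`, this is a closed walk of odd length
`2k - 1`, which contains an odd cycle of length at most `2k - 1`, impossible when `B` has
odd-girth `2k + 1`. So `f` is injective on a clique of the `(2k-1)`-st walk-power of `G`, and
`B` has at least as many vertices as that clique.
-/

namespace SimpleGraph

variable {V W : Type*} {G : SimpleGraph V} {B : SimpleGraph W}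

theorem Walk.exists_isCycle_odd_length_le {u : V} (p : G.Walk u u) (hp : Odd p.length) :
    ∃ (v : V) (c : G.Walk v v), c.IsCycle ∧ Odd c.length ∧ c.length ≤ p.length := by
  induction hn : p.length using Nat.strong_induction_on generalizing u with
  | _ n ih =>
  subst hn
  cases p with
  | nil => simp at hp
  | cons h q =>
    by_cases hq : q.IsPath
    · refine ⟨u, .cons h q, ?_, hp, le_rfl⟩
      have hq_ne : q.length ≠ 0 := fun h0 => h.ne (Walk.eq_of_length_eq_zero h0).symm
      obtain ⟨m, hm⟩ := hp
      rw [Walk.length_cons] at hm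
      refine Walk.isCycle_iff_isPath_tail_and_le_length.mpr ⟨?_, by rw [Walk.length_cons]; omega⟩
      simpa using hq
    · -- `q` repeats a vertex `x`: cut out the closed subwalk `c` at `x`.
      simp only [Walk.isPath_iff_isSubwalk_imp_nil, not_forall] at hq
      obtain ⟨x, c, ⟨r₁, r₂, rfl⟩, hc⟩ := hq
      set p' : G.Walk u u := .cons h (r₁.append r₂)
      have hlen : (Walk.cons h ((r₁.append c).append r₂)).length = p'.length + c.length := by
        simp only [p', Walk.length_cons, Walk.length_append]; omega
      have hc_pos : 0 < c.length := Walk.not_nil_iff_lt_length.mp hc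
      have hp'_pos : 0 < p'.length := by simp [p']
      rw [hlen] at hp ⊢
      rcases Nat.even_or_odd c.length with hc_even | hc_odd
      · obtain ⟨v, d, hd⟩ :=
          ih p'.length (by omega) p' (Nat.odd_add.mp hp |>.mpr hc_even) rfl
        exact ⟨v, d, hd.1, hd.2.1, by omega⟩
      · obtain ⟨v, d, hd⟩ := ih c.length (by omega) c hc_odd rfl
        exact ⟨v, d, hd.1, hd.2.1, by omega⟩

theorem Walk.length_ne_of_forall_odd_isCycle {k : ℕ} (hk : 1 ≤ k)
    (hG : ∀ (v : V) (c : G.Walk v v), c.IsCycle → Odd c.length → 2 * k + 1 ≤ c.length)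
    {u : V} (p : G.Walk u u) : p.length ≠ 2 * k - 1 := by
  intro hp
  obtain ⟨v, c, hc, hc_odd, hc_le⟩ :=
    p.exists_isCycle_odd_length_le (hp ▸ ⟨k - 1, by omega⟩)
  have := hG v c hc hc_odd
  omega

/-- The walk-power `G^(r)` with its loops removed. -/
def walkPower (G : SimpleGraph V) (r : ℕ) : SimpleGraph V where
  Adj x y := x ≠ y ∧ ∃ p : G.Walk x y, p.length = r
  symm := ⟨fun _ _ ⟨hne, p, hp⟩ => ⟨hne.symm, p.reverse, by rw [Walk.length_reverse, hp]⟩⟩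
  loopless := ⟨fun _ h => h.1 rfl⟩

theorem walkPower_adj {r : ℕ} {x y : V} :
    (G.walkPower r).Adj x y ↔ x ≠ y ∧ ∃ p : G.Walk x y, p.length = r :=
  Iff.rfl

/-- Loops having been removed from `walkPower`, `f` induces a homomorphism only when `B^(r)` is
genuinely loopless. -/
def Hom.walkPower (f : G →g B) {r : ℕ} (hB : ∀ (u : W) (p : B.Walk u u), p.length ≠ r) :
    G.walkPower r →g B.walkPower r where
  toFun := f
  map_rel' := by
    intro x y hxy
    obtain ⟨-, p, hp⟩ := walkPower_adj.mp hxy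
    refine walkPower_adj.mpr ⟨fun hfxy => ?_, p.map f, by rw [Walk.length_map, hp]⟩
    exact hB (f y) ((p.map f).copy hfxy rfl) (by simpa using hp)

theorem IsClique.card_le_card_of_hom [Fintype W] {s : Finset V} (hs : G.IsClique (s : Set V))
    (f : G →g B) : s.card ≤ Fintype.card W := by
  classical
  refine Finset.card_le_card_of_injOn f (fun _ _ => Finset.mem_univ _) ?_
  intro x hx y hy hxy
  by_contra hne
  exact (f.map_adj (hs hx hy hne)).ne hxy

end SimpleGraph

/-- If `B` has odd-girth `2k+1` and bounds the class of planar graphs of odd-girth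
at least `2k+1`, and there is a planar graph `G` of odd-girth `2k+1` whose
`(2k-1)`-st walk-power contains a clique of size `2^{2k}`, then `B` has at least
`2^{2k}` vertices. -/
theorem bound_card_lower {VB : Type*} [Fintype VB] (B : SimpleGraph VB)
    (k : ℕ) (hk : 1 ≤ k)
    (hBodd : (∃ (v : VB) (c : B.Walk v v), c.IsCycle ∧ Odd c.length ∧ c.length = 2 * k + 1) ∧
      ∀ (v : VB) (c : B.Walk v v), c.IsCycle → Odd c.length → 2 * k + 1 ≤ c.length)
    (hbound : ∀ (VG : Type) [Fintype VG] (G : SimpleGraph VG), IsPlanar G →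
      (∀ (v : VG) (c : G.Walk v v), c.IsCycle → Odd c.length → 2 * k + 1 ≤ c.length) →
      Nonempty (G →g B))
    (hexists : ∃ (VG : Type) (_ : Fintype VG) (G : SimpleGraph VG) (s : Finset VG),
      IsPlanar G ∧
      (∃ (v : VG) (c : G.Walk v v), c.IsCycle ∧ Odd c.length ∧ c.length = 2 * k + 1) ∧
      (∀ (v : VG) (c : G.Walk v v), c.IsCycle → Odd c.length → 2 * k + 1 ≤ c.length) ∧
      s.card = 2 ^ (2 * k) ∧
      (∀ x ∈ s, ∀ y ∈ s, x ≠ y → ∃ w : G.Walk x y, w.length = 2 * k - 1)) :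
    2 ^ (2 * k) ≤ Fintype.card VB := by
  obtain ⟨VG, _, G, s, hplanar, -, hG, hcard, hclique⟩ := hexists
  obtain ⟨f⟩ := hbound VG G hplanar hG
  have hs : (G.walkPower (2 * k - 1)).IsClique (s : Set VG) :=
    fun x hx y hy hne => SimpleGraph.walkPower_adj.mpr ⟨hne, hclique x hx y hy hne⟩
  have hB_loopless : ∀ (u : VB) (p : B.Walk u u), p.length ≠ 2 * k - 1 :=
    fun _ => SimpleGraph.Walk.length_ne_of_forall_odd_isCycle hk hBodd.2
  calc 2 ^ (2 * k) = s.card := hcard.symm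
    _ ≤ Fintype.card VB := hs.card_le_card_of_hom (f.walkPower hB_loopless)
end
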